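/- Let Σ = {0,1,…,m−1}, let p = (p_0,…,p_{m−1}) be a probability weight (zero entries allowed), and let ν_p be the associated Bernoulli product measure on Σ^∞. Fix letters θ_0 and θ with p_{θ_0} > 0 and 0 < p_θ < 1. Then for ν_p-almost every y ∈ Σ^∞: limsup_{k→∞} l_{θ_0,θ}(k;y) / (log k / (−log p_θ)) = 1. -/

import Mathlib

open MeasureTheory Metric Set Filter
open scoped ENNReal NNReal

noncomputable section

namespace BMpaper

/-- The plane with the Euclidean metric. -/
abbrev Pt : Type := EuclideanSpace ℝ (Fin 2)

/-- The affine map `S_d (z) = ((z₁+d₁)/n, (z₂+d₂)/m)`. -/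
def Smap (n m : ℕ) (d : ℕ × ℕ) (z : Pt) : Pt :=
  (WithLp.equiv 2 (Fin 2 → ℝ)).symm ![(z 0 + d.1) / n, (z 1 + d.2) / m]

/-- `SIter n m ω k = S_{ω 1} ∘ ⋯ ∘ S_{ω k}` (indices start at `1`). -/
def SIter (n m : ℕ) (ω : ℕ → ℕ × ℕ) : ℕ → Pt → Pt
  | 0 => id
  | k + 1 => SIter n m ω k ∘ Smap n m (ω (k + 1))

/-- The unit square `[0,1]²`. -/
def unitSq : Set Pt := {z | z 0 ∈ Icc (0 : ℝ) 1 ∧ z 1 ∈ Icc (0 : ℝ) 1}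

/-- The fiber sequence: `a_j = #{i : (i,j) ∈ D}`. -/
def fiber (D : Finset (ℕ × ℕ)) (j : ℕ) : ℕ := (D.filter fun d => d.2 = j).card

/-- `E` is the Bedford-McMullen carpet `K(n,m,D)`. -/
def IsBMCarpet (n m : ℕ) (D : Finset (ℕ × ℕ)) (E : Set Pt) : Prop :=
  2 ≤ m ∧ m < n ∧ (∀ d ∈ D, d.1 < n ∧ d.2 < m) ∧ D.Nonempty ∧
    E.Nonempty ∧ IsCompact E ∧ E = ⋃ d ∈ D, Smap n m d '' E

/-- `μ` is the uniform Bernoulli measure of the carpet `E = K(n,m,D)`: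
a Borel probability measure supported on `E` with
`μ = (1/#D) ∑_{d ∈ D} μ ∘ S_d⁻¹`. -/
def IsUnifBernoulli (n m : ℕ) (D : Finset (ℕ × ℕ)) (E : Set Pt) (μ : Measure Pt) : Prop :=
  IsProbabilityMeasure μ ∧ μ Eᶜ = 0 ∧
    ∀ A : Set Pt, MeasurableSet A →
      μ A = (D.card : ℝ≥0∞)⁻¹ * ∑ d ∈ D, μ (Smap n m d ⁻¹' A)

/-- The support of a measure: points all of whose balls have positive measure. -/
def msupport {X : Type*} [PseudoMetricSpace X] [MeasurableSpace X] (μ : Measure X) : Set X :=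
  {x | ∀ r > 0, 0 < μ (ball x r)}

/-- A measure is doubling if `sup_{x ∈ supp μ, r > 0} μ(B_{2r}(x))/μ(B_r(x)) < ∞`. -/
def IsDoubling {X : Type*} [PseudoMetricSpace X] [MeasurableSpace X] (μ : Measure X) : Prop :=
  ∃ C : ℝ≥0∞, C ≠ ⊤ ∧ ∀ x ∈ msupport μ, ∀ r > 0, μ (ball x (2 * r)) ≤ C * μ (ball x r)

/-- `ω ∈ D^∞` (indices from 1) is a coding of `z` if `{z} = ⋂_k S_{ω|k}([0,1]²)`. -/
def IsCoding (n m : ℕ) (D : Finset (ℕ × ℕ)) (ω : ℕ → ℕ × ℕ) (z : Pt) : Prop :=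
  (∀ j, 1 ≤ j → ω j ∈ D) ∧ (⋂ k ≥ 1, SIter n m ω k '' unitSq) = {z}

/-- The set `V_E` of points having two codings with different vertical components. -/
def VSet (n m : ℕ) (D : Finset (ℕ × ℕ)) (E : Set Pt) : Set Pt :=
  {z | z ∈ E ∧ ∃ ω ω' : ℕ → ℕ × ℕ, IsCoding n m D ω z ∧ IsCoding n m D ω' z ∧
    ∃ j, 1 ≤ j ∧ (ω j).2 ≠ (ω' j).2}

/-- A gauge function: strictly decreasing and positive on `(0,1)`, tending to `∞` at `0⁺`. -/
structure IsGauge (φ : ℝ → ℝ) : Prop where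
  pos : ∀ r ∈ Ioo (0 : ℝ) 1, 0 < φ r
  anti : StrictAntiOn φ (Ioo (0 : ℝ) 1)
  tendsto_top : Tendsto φ (nhdsWithin 0 (Ioi 0)) atTop

/-- The upper doubling index `δ̄_φ(z; μ, ρ)`. -/
def upperIndex {X : Type*} [PseudoMetricSpace X] [MeasurableSpace X]
    (μ : Measure X) (φ : ℝ → ℝ) (ρ : ℝ) (z : X) : EReal :=
  limsup (fun r : ℝ =>
    ⨆ z' ∈ {w | w ∈ msupport μ ∧ ball w (ρ * r) ⊆ ball z r},
      ((Real.log ((μ (ball z r)).toReal / (μ (ball z' (ρ * r))).toReal) / φ r : ℝ) : EReal))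
    (nhdsWithin 0 (Ioi 0))

/-- The lower doubling index `δ_φ(z; μ, ρ)` (with `liminf`). -/
def lowerIndex {X : Type*} [PseudoMetricSpace X] [MeasurableSpace X]
    (μ : Measure X) (φ : ℝ → ℝ) (ρ : ℝ) (z : X) : EReal :=
  liminf (fun r : ℝ =>
    ⨆ z' ∈ {w | w ∈ msupport μ ∧ ball w (ρ * r) ⊆ ball z r},
      ((Real.log ((μ (ball z r)).toReal / (μ (ball z' (ρ * r))).toReal) / φ r : ℝ) : EReal))
    (nhdsWithin 0 (Ioi 0))

/-- `σ = log m / log n`. -/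
def sigma (n m : ℕ) : ℝ := Real.log m / Real.log n

/-- `ℓ(k) = ⌊k/σ⌋`. -/
def ell (n m : ℕ) (k : ℕ) : ℕ := ⌊(k : ℝ) / sigma n m⌋₊

/-- `Ω_j`: sequences whose vertical component ends with `j^∞`. -/
def OmegaSet (j : ℕ) : Set (ℕ → ℕ × ℕ) := {ω | ∃ K, ∀ h, K ≤ h → (ω h).2 = j}

/-- `h_p(k; ω)`: the largest `h ≤ ℓ(k)` with `y_h ≠ p` (and `0` if there is none). -/
def hIdx (n m : ℕ) (p : ℕ) (ω : ℕ → ℕ × ℕ) (k : ℕ) : ℕ :=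
  WithBot.unbotD 0 ((Finset.Icc 1 (ell n m k)).filter fun h => (ω h).2 ≠ p).max

/-- `β_0(k; ω)`. -/
def beta0 (n m : ℕ) (D : Finset (ℕ × ℕ)) (ω : ℕ → ℕ × ℕ) (k : ℕ) : ℕ :=
  if 1 ≤ hIdx n m 0 ω k ∧ 0 < fiber D ((ω (hIdx n m 0 ω k)).2 - 1) then
    ell n m k - max k (hIdx n m 0 ω k)
  else 0

/-- `β_{m-1}(k; ω)`. -/
def betaTop (n m : ℕ) (D : Finset (ℕ × ℕ)) (ω : ℕ → ℕ × ℕ) (k : ℕ) : ℕ :=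
  if 1 ≤ hIdx n m (m - 1) ω k ∧ 0 < fiber D ((ω (hIdx n m (m - 1) ω k)).2 + 1) then
    ell n m k - max k (hIdx n m (m - 1) ω k)
  else 0

/-- The reverse run length function `β(k; ω) = max (β_0(k;ω), β_{m-1}(k;ω))`. -/
def beta (n m : ℕ) (D : Finset (ℕ × ℕ)) (ω : ℕ → ℕ × ℕ) (k : ℕ) : ℕ :=
  max (beta0 n m D ω k) (betaTop n m D ω k)

/-- The approximate square `Q_k(ω)` of rank `k`: the `π`-image of the set of sequences
agreeing with `ω` horizontally up to `k` and vertically up to `ℓ(k)`. -/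
def approxSq (n m : ℕ) (D : Finset (ℕ × ℕ)) (ω : ℕ → ℕ × ℕ) (k : ℕ) : Set Pt :=
  {z | ∃ ω' : ℕ → ℕ × ℕ, IsCoding n m D ω' z ∧
    (∀ i, 1 ≤ i → i ≤ k → (ω' i).1 = (ω i).1) ∧
    (∀ i, 1 ≤ i → i ≤ ell n m k → (ω' i).2 = (ω i).2)}

/-- `U(z; r, ρ) = sup { μ(B_r(z))/μ(B_{ρr}(z')) : z' ∈ E, B_{ρr}(z') ⊆ B_r(z) }`. -/
def Ufun (μ : Measure Pt) (E : Set Pt) (ρ : ℝ) (z : Pt) (r : ℝ) : ℝ≥0∞ :=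
  ⨆ z' ∈ {w | w ∈ E ∧ ball w (ρ * r) ⊆ ball z r}, μ (ball z r) / μ (ball z' (ρ * r))

/-- `Ξ_k(z)` (w.r.t. radius `r`): approximate squares of rank `k` meeting `B_r(z)`. -/
def Xi (n m : ℕ) (D : Finset (ℕ × ℕ)) (k : ℕ) (z : Pt) (r : ℝ) : Set (Set Pt) :=
  {Q | ∃ ω : ℕ → ℕ × ℕ, (∀ j, 1 ≤ j → ω j ∈ D) ∧ Q = approxSq n m D ω k ∧
    (Q ∩ ball z r).Nonempty}

/-- `f` is bi-Lipschitz on `E` with constant `C`. -/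
def BiLipOn (f : Pt → Pt) (E : Set Pt) (C : ℝ) : Prop :=
  ∀ x ∈ E, ∀ y ∈ E,
    C⁻¹ * dist x y ≤ dist (f x) (f y) ∧ dist (f x) (f y) ≤ C * dist x y

/-- `E` and `F` are Lipschitz equivalent. -/
def LipEquiv (E F : Set Pt) : Prop :=
  ∃ (f : Pt → Pt) (C : ℝ), 0 < C ∧ Set.BijOn f E F ∧ BiLipOn f E C

/-- The modified run length `l_{θ₀,θ}(k; y)`. -/
def runLenMod (θ0 θ : ℕ) (y : ℕ → ℕ) (k : ℕ) : ℕ :=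
  if y (k - 1) = θ0 then sInf {t | y (k + t) ≠ θ} else 0

/-- The upper index `γ̄(z; μ, ρ)`. -/
def gammaUpper {X : Type*} [PseudoMetricSpace X] [MeasurableSpace X]
    (μ : Measure X) (ρ : ℝ) (z : X) : EReal :=
  limsup (fun r : ℝ =>
    ⨆ z' ∈ {w | w ∈ msupport μ ∧ ball w (ρ * r) ⊆ ball z r},
      ((Real.log (μ (ball z' (ρ * r))).toReal / Real.log (μ (ball z r)).toReal : ℝ) : EReal))
    (nhdsWithin 0 (Ioi 0))

/-- The lower index `γ(z; μ, ρ)` (with `liminf`). -/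
def gammaLower {X : Type*} [PseudoMetricSpace X] [MeasurableSpace X]
    (μ : Measure X) (ρ : ℝ) (z : X) : EReal :=
  liminf (fun r : ℝ =>
    ⨆ z' ∈ {w | w ∈ msupport μ ∧ ball w (ρ * r) ⊆ ball z r},
      ((Real.log (μ (ball z' (ρ * r))).toReal / Real.log (μ (ball z r)).toReal : ℝ) : EReal))
    (nhdsWithin 0 (Ioi 0))

end BMpaper

/-!
Write `q = p θ` and `L = -log q`. The event that `θ` fills the positions
`k, …, k + ⌈c log k / L⌉ - 1` has probability at most `k^(-c)`, so for `c > 1` the first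
Borel–Cantelli lemma gives `l(k) ≤ c log k / L` eventually. For `c < 1`, place the words
`θ₀ θ^s θ₁` with `s = ⌈c log k / L⌉` in disjoint windows starting at `k_(i+1) = k_i + s(k_i) + 2`.
These events are independent, and their probabilities, of order `k_i^(-c)`, dominate
`(k_(i+1) - k_i) / (k_i + 1)`, whose sum diverges with the harmonic series; the second
Borel–Cantelli lemma then gives `l(k_i) = s(k_i)` infinitely often.
-/

namespace BMpaper

open Function

theorem sum_Ico_le_sum_gap_mul {K : ℕ → ℕ} (hK : Monotone K) {f : ℕ → ℝ} (hf : Antitone f)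
    (n : ℕ) :
    ∑ j ∈ Finset.Ico (K 0) (K n), f j ≤
      ∑ i ∈ Finset.range n, ((K (i + 1) - K i : ℕ) : ℝ) * f (K i) := by
  induction n with
  | zero => simp
  | succ n ih =>
    rw [← Finset.sum_Ico_consecutive _ (hK (Nat.zero_le n)) (hK n.le_succ), Finset.sum_range_succ]
    gcongr
    rw [← Nat.card_Ico, ← nsmul_eq_mul]
    exact Finset.sum_le_card_nsmul _ _ _ fun j hj => hf (Finset.mem_Ico.1 hj).1

theorem not_summable_gap_mul {K : ℕ → ℕ} (hK : StrictMono K) {f : ℕ → ℝ} (hf : Antitone f)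
    (hf0 : ∀ j, 0 ≤ f j) (hfs : ¬ Summable f) :
    ¬ Summable fun i => ((K (i + 1) - K i : ℕ) : ℝ) * f (K i) := by
  intro hs
  refine hfs (summable_of_sum_range_le hf0 (c := ∑ j ∈ Finset.range (K 0), f j +
    ∑' i, ((K (i + 1) - K i : ℕ) : ℝ) * f (K i)) fun n => ?_)
  calc ∑ j ∈ Finset.range n, f j
      ≤ ∑ j ∈ Finset.range (K n), f j :=
        Finset.sum_le_sum_of_subset_of_nonneg (Finset.range_subset_range.2 (hK.id_le n))
          fun j _ _ => hf0 j
    _ = ∑ j ∈ Finset.range (K 0), f j + ∑ j ∈ Finset.Ico (K 0) (K n), f j := by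
        rw [Finset.range_eq_Ico, Finset.range_eq_Ico,
          Finset.sum_Ico_consecutive _ (Nat.zero_le _) (hK.monotone (Nat.zero_le n))]
    _ ≤ _ := by
        gcongr
        exact (sum_Ico_le_sum_gap_mul hK.monotone hf n).trans
          (hs.sum_le_tsum _ fun i _ => mul_nonneg (Nat.cast_nonneg _) (hf0 _))

theorem limsup_div_eq_one_of {a b : ℕ → ℝ} (hb : ∀ᶠ k in atTop, 0 < b k)
    (hup : ∀ n : ℕ, ∀ᶠ k in atTop, a k ≤ (1 + 1 / ((n : ℝ) + 1)) * b k)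
    (hlow : ∀ n : ℕ, ∃ᶠ k in atTop, (1 - 1 / ((n : ℝ) + 1)) * b k ≤ a k) :
    limsup (fun k => ((a k / b k : ℝ) : EReal)) atTop = 1 := by
  have hto (s : ℝ) : Tendsto (fun n : ℕ => ((1 + s * (1 / ((n : ℝ) + 1)) : ℝ) : EReal)) atTop
      (nhds 1) := by
    rw [← EReal.coe_one, EReal.tendsto_coe]
    simpa using (tendsto_one_div_add_atTop_nhds_zero_nat (𝕜 := ℝ)).const_mul s |>.const_add 1
  refine le_antisymm (ge_of_tendsto ((hto 1).congr fun n => by rw [one_mul]) ?_)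
    (le_of_tendsto ((hto (-1)).congr fun n => by rw [neg_one_mul, ← sub_eq_add_neg]) ?_)
  · refine Eventually.of_forall fun n => limsup_le_of_le (by isBoundedDefault) ?_
    filter_upwards [hup n, hb] with k hk hbk
    exact EReal.coe_le_coe_iff.2 ((div_le_iff₀ hbk).2 hk)
  · refine Eventually.of_forall fun n => le_limsup_of_frequently_le ?_ (by isBoundedDefault)
    refine ((hlow n).and_eventually hb).mono fun k ⟨hk, hbk⟩ => ?_
    exact EReal.coe_le_coe_iff.2 ((le_div_iff₀ hbk).2 hk)

theorem exists_ne_pos_of_sum_eq_one {α : Type*} {s : Finset α} {p : α → ℝ}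
    (hsum : ∑ j ∈ s, p j = 1) {θ : α} (hθ : p θ < 1) :
    ∃ j, j ≠ θ ∧ 0 < p j := by
  classical
  by_contra! h
  have hle : ∑ j ∈ s, p j ≤ ∑ j ∈ s, if j = θ then p θ else 0 :=
    Finset.sum_le_sum fun j _ => by
      split_ifs with hj
      · rw [hj]
      · exact h j hj
  rw [Finset.sum_ite_eq'] at hle
  split_ifs at hle <;> linarith

theorem runLenMod_lt_of_exists_ne {θ0 θ : ℕ} {y : ℕ → ℕ} {k s : ℕ}
    (h : ∃ t < s, y (k + t) ≠ θ) : runLenMod θ0 θ y k < s := by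
  obtain ⟨t, hts, ht⟩ := h
  unfold runLenMod
  split_ifs
  · exact (Nat.sInf_le ht).trans_lt hts
  · exact (Nat.zero_le t).trans_lt hts

theorem runLenMod_eq_of_run {θ0 θ : ℕ} {y : ℕ → ℕ} {k s : ℕ} (h0 : y (k - 1) = θ0)
    (hrun : ∀ t < s, y (k + t) = θ) (hend : y (k + s) ≠ θ) : runLenMod θ0 θ y k = s := by
  rw [runLenMod, if_pos h0]
  refine le_antisymm (Nat.sInf_le hend) (le_of_not_gt fun hlt => ?_)
  exact Nat.sInf_mem (s := {t | y (k + t) ≠ θ}) ⟨s, hend⟩ (hrun _ hlt)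

def runThreshold (q c : ℝ) (k : ℕ) : ℕ := ⌈c * (Real.log k / -Real.log q)⌉₊

section Threshold

variable {q c : ℝ}

theorem rpow_mul_log_div_neg_log (hq0 : 0 < q) (hq1 : q < 1) {x : ℝ} (hx : 0 < x) :
    q ^ (c * (Real.log x / -Real.log q)) = x ^ (-c) := by
  have hlog : Real.log q ≠ 0 := (Real.log_neg hq0 hq1).ne
  rw [Real.rpow_def_of_pos hq0, Real.rpow_def_of_pos hx]
  congr 1
  field_simp

theorem runThreshold_lt (hc : 0 ≤ c) (hq0 : 0 < q) (hq1 : q < 1) (k : ℕ) :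
    (runThreshold q c k : ℝ) < c * (Real.log k / -Real.log q) + 1 :=
  Nat.ceil_lt_add_one <| mul_nonneg hc <|
    div_nonneg (Real.log_natCast_nonneg k) (neg_nonneg.2 (Real.log_nonpos hq0.le hq1.le))

theorem pow_runThreshold_le (hq0 : 0 < q) (hq1 : q < 1) {k : ℕ} (hk : 0 < k) :
    q ^ runThreshold q c k ≤ (k : ℝ) ^ (-c) := by
  rw [← rpow_mul_log_div_neg_log hq0 hq1 (Nat.cast_pos.2 hk), ← Real.rpow_natCast]
  exact Real.rpow_le_rpow_of_exponent_ge hq0 hq1.le (Nat.le_ceil _)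

theorem mul_rpow_le_pow_runThreshold (hc : 0 ≤ c) (hq0 : 0 < q) (hq1 : q < 1) {k : ℕ}
    (hk : 0 < k) : q * (k : ℝ) ^ (-c) ≤ q ^ runThreshold q c k := by
  rw [← rpow_mul_log_div_neg_log hq0 hq1 (Nat.cast_pos.2 hk), ← Real.rpow_natCast,
    mul_comm, ← Real.rpow_add_one hq0.ne']
  exact Real.rpow_le_rpow_of_exponent_ge hq0 hq1.le (runThreshold_lt hc hq0 hq1 k).le

theorem eventually_runThreshold_add_two_le (hc0 : 0 ≤ c) (hc1 : c < 1) (hq0 : 0 < q)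
    (hq1 : q < 1) : ∀ᶠ k : ℕ in atTop, (runThreshold q c k : ℝ) + 2 ≤ (k : ℝ) ^ (1 - c) := by
  have hr : 0 < 1 - c := by linarith
  have hlittle : (fun x : ℝ => c * (Real.log x / -Real.log q) + 3) =o[atTop] (· ^ (1 - c)) :=
    (((isLittleO_log_rpow_atTop hr).const_mul_left (c / -Real.log q)).congr_left
      fun x => by ring).add <| Asymptotics.isLittleO_const_left.2 <|
        Or.inr (tendsto_norm_atTop_atTop.comp (tendsto_rpow_atTop hr))
  filter_upwards [tendsto_natCast_atTop_atTop.eventually (hlittle.bound one_pos)] with k hk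
  rw [one_mul, Real.norm_of_nonneg (Real.rpow_nonneg (Nat.cast_nonneg k) _)] at hk
  linarith [runThreshold_lt hc0 hq0 hq1 k, (Real.le_norm_self _).trans hk]

end Threshold

def cylinderOf (s : Finset ℕ) (c : ℕ → ℕ) : Set (ℕ → ℕ) := {y | ∀ i ∈ s, y i = c i}

theorem measurableSet_cylinderOf (s : Finset ℕ) (c : ℕ → ℕ) :
    MeasurableSet (cylinderOf s c) := by
  simp only [cylinderOf, Set.ofPred_forall]
  exact .biInter s.countable_toSet fun i _ =>
    measurableSet_eq_fun (measurable_pi_apply i) measurable_const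

theorem cylinderOf_congr {s : Finset ℕ} {c c' : ℕ → ℕ} (h : ∀ i ∈ s, c i = c' i) :
    cylinderOf s c = cylinderOf s c' := by
  ext y
  exact forall₂_congr fun i hi => by rw [h i hi]

def IsBernoulliMeasure (ν : Measure (ℕ → ℕ)) (p : ℕ → ℝ) : Prop :=
  ∀ s : Finset ℕ, ∀ c : ℕ → ℕ, ν (cylinderOf s c) = ∏ i ∈ s, ENNReal.ofReal (p (c i))

/-- The word `θ₀ θ^s θ₁`, written on the positions `k - 1, …, k + s`. -/
def runPattern (θ0 θ θ1 k s : ℕ) (j : ℕ) : ℕ :=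
  if j + 1 = k then θ0 else if j < k + s then θ else θ1

theorem runLenMod_eq_of_mem_cylinderOf_runPattern {θ0 θ θ1 k s : ℕ} {y : ℕ → ℕ} (hk : 1 ≤ k)
    (hθ1θ : θ1 ≠ θ)
    (hy : y ∈ cylinderOf (Finset.Ico (k - 1) (k + s + 1)) (runPattern θ0 θ θ1 k s)) :
    runLenMod θ0 θ y k = s := by
  have hy' : ∀ j, k - 1 ≤ j → j ≤ k + s → y j = runPattern θ0 θ θ1 k s j :=
    fun j h1 h2 => hy j (Finset.mem_Ico.2 ⟨h1, by omega⟩)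
  refine runLenMod_eq_of_run ?_ (fun t ht => ?_) ?_
  · rw [hy' _ le_rfl (by omega), runPattern, if_pos (by omega)]
  · rw [hy' _ (by omega) (by omega), runPattern, if_neg (by omega), if_pos (by omega)]
  · rw [hy' _ (by omega) le_rfl, runPattern, if_neg (by omega), if_neg (by omega)]
    exact hθ1θ

/-- Starts `k` of the disjoint windows `[k - 1, k + s k]` that carry the words `θ₀ θ^(s k) θ₁`. -/
def runStarts (s : ℕ → ℕ) : ℕ → ℕ
  | 0 => 1
  | i + 1 => runStarts s i + s (runStarts s i) + 2

theorem one_le_runStarts (s : ℕ → ℕ) (i : ℕ) : 1 ≤ runStarts s i := by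
  cases i <;> simp [runStarts]

theorem runStarts_strictMono (s : ℕ → ℕ) : StrictMono (runStarts s) :=
  strictMono_nat_of_lt_succ fun i => by simp only [runStarts]; omega

theorem pairwise_disjoint_runStarts_windows (s : ℕ → ℕ) :
    Pairwise (Disjoint on fun i =>
      Finset.Ico (runStarts s i - 1) (runStarts s i + s (runStarts s i) + 1)) := by
  refine (pairwise_disjoint_on _).2 fun i j hij => Finset.disjoint_left.2 fun x hi hj => ?_
  have hle := (runStarts_strictMono s).monotone (Nat.succ_le_of_lt hij)
  simp only [runStarts, Finset.mem_Ico] at hle hi hj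
  omega

theorem not_summable_pow_runThreshold_runStarts {q c : ℝ} (hc0 : 0 ≤ c) (hc1 : c < 1)
    (hq0 : 0 < q) (hq1 : q < 1) :
    ¬ Summable fun i => q ^ runThreshold q c (runStarts (runThreshold q c) i) := by
  set s := runThreshold q c
  set K := runStarts s
  have hharmonic : ¬ Summable fun j : ℕ => 1 / ((j : ℝ) + 1) := by
    simpa using (summable_nat_add_iff 1).not.2 Real.not_summable_one_div_natCast
  have hanti : Antitone fun j : ℕ => 1 / ((j : ℝ) + 1) := fun i j hij => by
    dsimp only
    gcongr
  intro hs
  refine not_summable_gap_mul (runStarts_strictMono s) hanti (fun j => by positivity) hharmonic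
    (Summable.of_norm_bounded_eventually_nat (hs.mul_left q⁻¹) ?_)
  filter_upwards [(runStarts_strictMono s).tendsto_atTop.eventually
    (eventually_runThreshold_add_two_le hc0 hc1 hq0 hq1)] with i hi
  have hK : (0 : ℝ) < K i := Nat.cast_pos.2 (one_le_runStarts s i)
  have hgap : ((K (i + 1) - K i : ℕ) : ℝ) = s (K i) + 2 := by
    simp only [K, runStarts]
    push_cast [Nat.add_sub_cancel_left, add_assoc]
    ring
  rw [hgap, Real.norm_of_nonneg (by positivity), ← div_eq_mul_one_div,
    div_le_iff₀ (by positivity)]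
  calc (s (K i) : ℝ) + 2 ≤ (K i : ℝ) ^ (1 - c) := hi
    _ = (K i : ℝ) ^ (-c) * K i := by
        rw [← Real.rpow_add_one hK.ne']; ring_nf
    _ ≤ q⁻¹ * q ^ s (K i) * (K i + 1) := by
        gcongr
        · rw [le_inv_mul_iff₀ hq0]
          exact mul_rpow_le_pow_runThreshold hc0 hq0 hq1 (one_le_runStarts s i)
        · linarith

section Bernoulli

variable {ν : Measure (ℕ → ℕ)} {p : ℕ → ℝ}

theorem IsBernoulliMeasure.iIndepSet (hν : IsBernoulliMeasure ν p) {ι : Type*}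
    {F : ι → Finset ℕ} (hF : Pairwise (Disjoint on F)) (c : ι → ℕ → ℕ) :
    ProbabilityTheory.iIndepSet (fun i => cylinderOf (F i) (c i)) ν := by
  classical
  -- with disjoint windows all patterns can be read off one sequence `g`
  let g : ℕ → ℕ := fun j => if h : ∃ i, j ∈ F i then c h.choose j else 0
  have hg : ∀ i, ∀ j ∈ F i, c i j = g j := fun i j hj => by
    have h : ∃ i, j ∈ F i := ⟨i, hj⟩
    simp only [g, dif_pos h]
    rw [hF.eq (Finset.not_disjoint_iff.2 ⟨j, h.choose_spec, hj⟩)]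
  rw [show (fun i => cylinderOf (F i) (c i)) = fun i => cylinderOf (F i) g from
    funext fun i => cylinderOf_congr (hg i),
    ProbabilityTheory.iIndepSet_iff_meas_biInter fun i => measurableSet_cylinderOf _ _]
  intro T
  have hinter : ⋂ i ∈ T, cylinderOf (F i) g = cylinderOf (T.biUnion F) g := by
    ext y
    simp only [cylinderOf, Set.mem_iInter, Set.mem_ofPred_eq, Finset.mem_biUnion]
    exact ⟨fun h j ⟨i, hi, hj⟩ => h i hi j hj, fun h i hi j hj => h j ⟨i, hi, hj⟩⟩
  rw [hinter, hν, Finset.prod_biUnion fun i _ j _ hij => hF hij]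
  exact Finset.prod_congr rfl fun i _ => (hν _ _).symm

theorem IsBernoulliMeasure.measure_cylinderOf_const (hν : IsBernoulliMeasure ν p) (k t θ : ℕ) :
    ν (cylinderOf (Finset.Ico k (k + t)) fun _ => θ) = ENNReal.ofReal (p θ) ^ t := by
  rw [hν, Finset.prod_const, Nat.card_Ico, Nat.add_sub_cancel_left]

theorem IsBernoulliMeasure.measure_cylinderOf_runPattern (hν : IsBernoulliMeasure ν p)
    {k : ℕ} (hk : 1 ≤ k) (θ0 θ θ1 s : ℕ) :
    ν (cylinderOf (Finset.Ico (k - 1) (k + s + 1)) (runPattern θ0 θ θ1 k s)) =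
      ENNReal.ofReal (p θ0) * ENNReal.ofReal (p θ) ^ s * ENNReal.ofReal (p θ1) := by
  rw [hν, Finset.prod_eq_prod_Ico_succ_bot (by omega), Nat.sub_add_cancel hk,
    Finset.prod_Ico_succ_top (by omega), mul_assoc]
  have hmid : ∀ j ∈ Finset.Ico k (k + s), runPattern θ0 θ θ1 k s j = θ := fun j hj => by
    rw [Finset.mem_Ico] at hj
    rw [runPattern, if_neg (by omega), if_pos hj.2]
  rw [Finset.prod_congr rfl fun j hj => by rw [hmid j hj], Finset.prod_const, Nat.card_Ico,
    Nat.add_sub_cancel_left, runPattern, if_pos (by omega), runPattern, if_neg (by omega),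
    if_neg (by omega)]

theorem IsBernoulliMeasure.ae_eventually_runLenMod_le (hν : IsBernoulliMeasure ν p)
    (θ0 : ℕ) {θ : ℕ} (hq0 : 0 < p θ) (hq1 : p θ < 1) {c : ℝ} (hc : 1 < c) :
    ∀ᵐ y ∂ν, ∀ᶠ k : ℕ in atTop,
      (runLenMod θ0 θ y k : ℝ) ≤ c * (Real.log k / -Real.log (p θ)) := by
  set t := runThreshold (p θ) c
  set B : ℕ → Set (ℕ → ℕ) := fun k => cylinderOf (Finset.Ico k (k + t k)) fun _ => θ
  have hB : ∀ k, ν (B k) = ENNReal.ofReal (p θ) ^ t k := fun k =>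
    hν.measure_cylinderOf_const k (t k) θ
  have hBsucc (k : ℕ) : ν (B (k + 1)) ≤ ENNReal.ofReal (((k + 1 : ℕ) : ℝ) ^ (-c)) := by
    rw [hB, ← ENNReal.ofReal_pow hq0.le]
    exact ENNReal.ofReal_le_ofReal (pow_runThreshold_le hq0 hq1 k.succ_pos)
  have hsummable : Summable fun k : ℕ => ((k + 1 : ℕ) : ℝ) ^ (-c) :=
    (summable_nat_add_iff 1).2 (Real.summable_nat_rpow.2 (by linarith))
  have hfinite : ∑' k, ν (B k) ≠ ⊤ := by
    rw [tsum_eq_zero_add' ENNReal.summable]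
    refine ENNReal.add_ne_top.2 ⟨by rw [hB]; exact ENNReal.pow_ne_top ENNReal.ofReal_ne_top, ?_⟩
    refine ne_top_of_le_ne_top
      (ENNReal.ofReal_ne_top (r := ∑' k : ℕ, ((k + 1 : ℕ) : ℝ) ^ (-c))) ?_
    rw [ENNReal.ofReal_tsum_of_nonneg (fun k => by positivity) hsummable]
    exact ENNReal.tsum_le_tsum hBsucc
  filter_upwards [ae_eventually_notMem hfinite] with y hy
  filter_upwards [hy] with k hk
  have hlt : runLenMod θ0 θ y k < t k := by
    simp only [B, cylinderOf, Set.mem_ofPred_eq, not_forall, Finset.mem_Ico] at hk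
    obtain ⟨j, ⟨hkj, hjt⟩, hj⟩ := hk
    exact runLenMod_lt_of_exists_ne ⟨j - k, by omega, by rwa [Nat.add_sub_cancel' hkj]⟩
  have hlt' : (runLenMod θ0 θ y k : ℝ) + 1 ≤ t k := by exact_mod_cast hlt
  linarith [runThreshold_lt (by linarith) hq0 hq1 k]

theorem IsBernoulliMeasure.ae_frequently_le_runLenMod [IsProbabilityMeasure ν]
    (hν : IsBernoulliMeasure ν p) {θ0 θ θ1 : ℕ} (hθ0 : 0 < p θ0) (hθ1 : 0 < p θ1)
    (hθ1θ : θ1 ≠ θ) (hq0 : 0 < p θ) (hq1 : p θ < 1) {c : ℝ} (hc0 : 0 ≤ c) (hc1 : c < 1) :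
    ∀ᵐ y ∂ν, ∃ᶠ k : ℕ in atTop, c * (Real.log k / -Real.log (p θ)) ≤ runLenMod θ0 θ y k := by
  set s := runThreshold (p θ) c
  set K := runStarts s
  set A : ℕ → Set (ℕ → ℕ) := fun i =>
    cylinderOf (Finset.Ico (K i - 1) (K i + s (K i) + 1)) (runPattern θ0 θ θ1 (K i) (s (K i)))
  have hA : ∀ i, ν (A i) = ENNReal.ofReal (p θ0 * p θ1 * p θ ^ s (K i)) := fun i => by
    rw [hν.measure_cylinderOf_runPattern (one_le_runStarts s i),
      ENNReal.ofReal_mul (by positivity), ENNReal.ofReal_mul hθ0.le, ENNReal.ofReal_pow hq0.le]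
    ring
  have hdiverge : ∑' i, ν (A i) = ⊤ := by
    by_contra hfin
    refine not_summable_pow_runThreshold_runStarts hc0 hc1 hq0 hq1
      ((summable_mul_left_iff (by positivity : p θ0 * p θ1 ≠ 0)).1 ?_)
    refine (ENNReal.summable_toReal hfin).congr fun i => ?_
    rw [hA, ENNReal.toReal_ofReal (by positivity)]
  have hlimsup := ProbabilityTheory.measure_limsup_eq_one (fun i => measurableSet_cylinderOf _ _)
    (hν.iIndepSet (pairwise_disjoint_runStarts_windows s) _) hdiverge
  rw [← measure_univ (μ := ν), ← ae_mem_iff_measure_eq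
    (MeasurableSet.measurableSet_limsup fun i => measurableSet_cylinderOf _ _).nullMeasurableSet]
    at hlimsup
  filter_upwards [hlimsup] with y hy
  refine (runStarts_strictMono s).tendsto_atTop.frequently
    ((mem_limsup_iff_frequently_mem.1 hy).mono fun i hi => ?_)
  rw [runLenMod_eq_of_mem_cylinderOf_runPattern (one_le_runStarts s i) hθ1θ hi]
  exact Nat.le_ceil _

end Bernoulli

theorem modified_run_length_ae_general
    (m : ℕ) (p : ℕ → ℝ)
    (hsum : ∑ j ∈ Finset.range m, p j = 1)
    (ν : Measure (ℕ → ℕ)) (hν : IsProbabilityMeasure ν)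
    (hcyl : ∀ s : Finset ℕ, ∀ c : ℕ → ℕ,
      ν {y | ∀ i ∈ s, y i = c i} = ∏ i ∈ s, ENNReal.ofReal (p (c i)))
    (θ0 θ : ℕ) (hθ0 : 0 < p θ0) (hθpos : 0 < p θ) (hθlt : p θ < 1) :
    ∀ᵐ y ∂ν,
      limsup (fun k : ℕ =>
        (((runLenMod θ0 θ y k : ℝ) / (Real.log k / (-Real.log (p θ))) : ℝ) : EReal))
        atTop = 1 := by
  have hbern : IsBernoulliMeasure ν p := hcyl
  obtain ⟨θ1, hθ1θ, hθ1⟩ := exists_ne_pos_of_sum_eq_one hsum hθlt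
  have hscale : ∀ᶠ k : ℕ in atTop, 0 < Real.log k / -Real.log (p θ) := by
    filter_upwards [eventually_gt_atTop 1] with k hk
    exact div_pos (Real.log_pos (by exact_mod_cast hk)) (neg_pos.2 (Real.log_neg hθpos hθlt))
  have hup := ae_all_iff.2 fun n : ℕ =>
    hbern.ae_eventually_runLenMod_le θ0 hθpos hθlt (c := 1 + 1 / ((n : ℝ) + 1))
      (lt_add_of_pos_right 1 (by positivity))
  have hlow := ae_all_iff.2 fun n : ℕ =>
    hbern.ae_frequently_le_runLenMod hθ0 hθ1 hθ1θ hθpos hθlt (c := 1 - 1 / ((n : ℝ) + 1))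
      (sub_nonneg.2 (div_le_one_of_le₀ (by linarith [n.cast_nonneg (α := ℝ)]) (by positivity)))
      (sub_lt_self 1 (by positivity))
  filter_upwards [hup, hlow] with y hyup hylow
  exact limsup_div_eq_one_of hscale hyup hylow

/-- **Lemma 5.3.** Law of the iterated modified run length for a Bernoulli
measure on `Σ^∞`, `Σ = {0, …, m-1}`. -/
theorem modified_run_length_ae
    (m : ℕ) (hm : 2 ≤ m) (p : ℕ → ℝ) (hp : ∀ j, 0 ≤ p j)
    (hsum : ∑ j ∈ Finset.range m, p j = 1) (hout : ∀ j, m ≤ j → p j = 0)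
    (ν : Measure (ℕ → ℕ)) (hν : IsProbabilityMeasure ν)
    (hcyl : ∀ s : Finset ℕ, ∀ c : ℕ → ℕ,
      ν {y | ∀ i ∈ s, y i = c i} = ∏ i ∈ s, ENNReal.ofReal (p (c i)))
    (θ0 θ : ℕ) (hθ0 : 0 < p θ0) (hθpos : 0 < p θ) (hθlt : p θ < 1) :
    ∀ᵐ y ∂ν,
      limsup (fun k : ℕ =>
        (((runLenMod θ0 θ y k : ℝ) / (Real.log k / (-Real.log (p θ))) : ℝ) : EReal))
        atTop = 1 :=
  modified_run_length_ae_general m p hsum ν hν hcyl θ0 θ hθ0 hθpos hθlt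

end BMpaper
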